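/- If every coordinate function χ_i (i : Fin n) lies in the subspace S(F,f) spanned by {f ∘ F^[j] : 0 ≤ j < n}, then the map F̂ defined by F̂ x = fun j => f (F^[j] x) is a bijection of Fin n → ZMod 2, i.e. the stream cipher system (F,f) is observable. -/
import Mathlib


/-- `S(F,f)`: the `ZMod 2`-linear span, inside the space of functions
`(Fin n → ZMod 2) → ZMod 2`, of the set `{f ∘ F^[j] : 0 ≤ j < n}`. -/
def SFf (n : ℕ) (F : (Fin n → ZMod 2) → (Fin n → ZMod 2))
    (f : (Fin n → ZMod 2) → ZMod 2) :
    Submodule (ZMod 2) ((Fin n → ZMod 2) → ZMod 2) :=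
  Submodule.span (ZMod 2)
    {g | ∃ j : ℕ, j < n ∧ g = fun x => f (F^[j] x)}

/-- If every coordinate function `χ_i` lies in the subspace `S(F,f)`
spanned by `{f ∘ F^[j] : 0 ≤ j < n}`, then the map `F̂ : x ↦ (j ↦ f (F^[j] x))` is a
bijection of `Fin n → ZMod 2`, i.e. the stream cipher system `(F,f)` is observable. -/
theorem observable_of_coordinates_mem_span (n : ℕ) (hn : 0 < n)
    (F : (Fin n → ZMod 2) → (Fin n → ZMod 2)) (f : (Fin n → ZMod 2) → ZMod 2)
    (hχ : ∀ i : Fin n, (fun x : Fin n → ZMod 2 => x i) ∈ SFf n F f) :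
    Function.Bijective (fun (x : Fin n → ZMod 2) => fun j : Fin n => f (F^[(j : ℕ)] x)) := by
  apply Finite.injective_iff_bijective.mp
  intro x y hxy
  have hagree : ∀ j : ℕ, j < n → f (F^[j] x) = f (F^[j] y) := by
    intro j hj
    simpa using congrFun hxy ⟨j, hj⟩
  let L : ((Fin n → ZMod 2) → ZMod 2) →ₗ[ZMod 2] ZMod 2 :=
    (LinearMap.proj x : ((Fin n → ZMod 2) → ZMod 2) →ₗ[ZMod 2] ZMod 2) -
    (LinearMap.proj y : ((Fin n → ZMod 2) → ZMod 2) →ₗ[ZMod 2] ZMod 2)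
  have hspan : SFf n F f ≤ LinearMap.ker L := by
    rw [SFf, Submodule.span_le]
    rintro g ⟨j, hj, rfl⟩
    simp [L, LinearMap.mem_ker, hagree j hj]
  funext i
  have hxi : L (fun x : Fin n → ZMod 2 => x i) = 0 := hspan (hχ i)
  have h2 : x i - y i = 0 := hxi
  exact sub_eq_zero.mp h2
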